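/- arXiv:0905.4187 — 2 statements merged into one kernel-verified Lean document; each statement's English description precedes it below -/
import Mathlib

section
/- For an odd prime p and any n with 0 ≤ n ≤ p-1, the Catalan-Larcombe-French numbers satisfy 128^n P_{p-1-n} ≡ (-1)^{(p-1)/2} P_n (mod p). -/
/-!
The Catalan–Larcombe–French numbers have the closed form
`P n = 2 ^ n * ∑ k, C(n, k) * C(2k, k) * C(2(n - k), n - k)`, which is checked by creative
telescoping: the summand satisfies the recurrence up to the difference `G (k + 1) - G k` of an
explicit rational certificate `G`.

Modulo `p`, the index `p - 1 - k` is congruent to `-k - 1`, and read backwards from there the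
recurrence becomes the recurrence again up to powers of `128`; so `k ↦ 128 ^ k * P (p - 1 - k)`
and `k ↦ P (p - 1) * P k` satisfy the same recurrence with the same first two values, and agree
for `k ≤ p - 1`. Finally, in the closed form for `P (p - 1)` every term but the middle one
contains a central binomial coefficient `C(2j, j)` with `j < p ≤ 2j`, so
`P (p - 1) ≡ C(p - 1, (p - 1) / 2) ^ 3 ≡ (-1) ^ ((p - 1) / 2)`.
-/

open Finset

def IsCLFRecurrence {R : Type*} [CommRing R] (u : ℕ → R) : Prop :=
  ∀ n : ℕ, 2 ≤ n →
    (n : R) ^ 2 * u n =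
      8 * (3 * (n : R) ^ 2 - 3 * (n : R) + 1) * u (n - 1) - 128 * ((n : R) - 1) ^ 2 * u (n - 2)

namespace IsCLFRecurrence

variable {R : Type*} [CommRing R] {u : ℕ → R}

lemma map {S : Type*} [CommRing S] (hu : IsCLFRecurrence u) (f : R →+* S) :
    IsCLFRecurrence (f ∘ u) := fun n hn ↦ by
  simpa [map_ofNat] using congrArg f (hu n hn)

lemma add_two (hu : IsCLFRecurrence u) (n : ℕ) :
    ((n : R) + 2) ^ 2 * u (n + 2) =
      8 * (3 * ((n : R) + 2) ^ 2 - 3 * ((n : R) + 2) + 1) * u (n + 1)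
        - 128 * ((n : R) + 1) ^ 2 * u n := by
  have h := hu (n + 2) (by omega)
  push_cast at h
  simpa only [Nat.add_sub_cancel, show n + 2 - 1 = n + 1 by omega, add_sub_assoc,
    show (2 : R) - 1 = 1 by norm_num] using h

lemma eq_of_initial_eq [IsDomain R] [CharZero R] {v : ℕ → R} (hu : IsCLFRecurrence u)
    (hv : IsCLFRecurrence v) (h0 : u 0 = v 0) (h1 : u 1 = v 1) : u = v := by
  funext n
  induction n using Nat.strong_induction_on with
  | _ n ih =>
    match n with
    | 0 => exact h0
    | 1 => exact h1
    | n + 2 =>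
      have hn : ((n : R) + 2) ^ 2 ≠ 0 := pow_ne_zero 2 (by exact_mod_cast (n + 1).succ_ne_zero)
      apply mul_left_cancel₀ hn
      rw [hu.add_two, hv.add_two, ih n (by omega), ih (n + 1) (by omega)]

lemma reflect {p : ℕ} [Fact p.Prime] {u : ℕ → ZMod p} (hu : IsCLFRecurrence u) (h0 : u 0 = 1)
    (h1 : u 1 = 8) : ∀ k ≤ p - 1, 128 ^ k * u (p - 1 - k) = u (p - 1) * u k := by
  have hp2 := (Fact.out : p.Prime).two_le
  intro k
  induction k using Nat.strong_induction_on with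
  | _ k ih =>
    match k with
    | 0 => simp [h0]
    | 1 =>
      intro _
      have h := hu p hp2
      rw [ZMod.natCast_self] at h
      rw [h1, show p - 1 - 1 = p - 2 by omega]
      linear_combination h
    | k + 2 =>
      intro hk
      obtain ⟨m, hm⟩ : ∃ m, p = m + k + 3 := ⟨p - 3 - k, by omega⟩
      have hm_cast : (m : ZMod p) = -k - 3 := by
        have h : ((m + k + 3 : ℕ) : ZMod p) = 0 := by rw [← hm, ZMod.natCast_self]
        push_cast at h
        linear_combination h
      have hk_ne : (k : ZMod p) + 2 ≠ 0 := by
        have h : ((k + 2 : ℕ) : ZMod p) ≠ 0 := by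
          rw [Ne, ZMod.natCast_eq_zero_iff]
          exact Nat.not_dvd_of_pos_of_lt (by omega) (by omega)
        exact_mod_cast h
      -- the recurrence at index `m ≡ -k - 3` is the recurrence at `k + 2` run backwards
      have hrefl := hu.add_two m
      rw [hm_cast, show m + 2 = p - 1 - k by omega, show m + 1 = p - 1 - (k + 1) by omega,
        show m = p - 1 - (k + 2) by omega] at hrefl
      have I1 := ih k (by omega) (by omega)
      have I2 := ih (k + 1) (by omega) (by omega)
      apply mul_left_cancel₀ (pow_ne_zero 2 hk_ne)
      linear_combination 128 ^ (k + 1) * hrefl - u (p - 1) * hu.add_two k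
        - 128 * ((k : ZMod p) + 1) ^ 2 * I1 + 8 * (3 * (k : ZMod p) ^ 2 + 9 * k + 7) * I2

end IsCLFRecurrence

def clfTerm (n k : ℕ) : ℕ := n.choose k * (2 * k).choose k * (2 * (n - k)).choose (n - k)

lemma clfTerm_eq_zero {n k : ℕ} (h : n < k) : clfTerm n k = 0 := by
  simp [clfTerm, Nat.choose_eq_zero_of_lt h]

lemma clfTerm_succ_succ (n k : ℕ) :
    (k + 1) ^ 2 * clfTerm (n + 1) (k + 1) = 2 * (n + 1) * (2 * k + 1) * clfTerm n k := by
  have hchoose := Nat.add_one_mul_choose_eq n k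
  have hcentral := Nat.succ_mul_centralBinom_succ k
  simp only [clfTerm, Nat.centralBinom_eq_two_mul_choose, Nat.add_sub_add_right] at *
  calc (k + 1) ^ 2 * ((n + 1).choose (k + 1) * (2 * (k + 1)).choose (k + 1) *
        (2 * (n - k)).choose (n - k))
      = ((n + 1).choose (k + 1) * (k + 1)) * ((k + 1) * (2 * (k + 1)).choose (k + 1)) *
        (2 * (n - k)).choose (n - k) := by ring
    _ = 2 * (n + 1) * (2 * k + 1) * (n.choose k * (2 * k).choose k *
        (2 * (n - k)).choose (n - k)) := by rw [← hchoose, hcentral]; ring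

lemma clfTerm_succ_left (n k : ℕ) :
    ((n : ℤ) + 1 - k) ^ 2 * clfTerm (n + 1) k =
      2 * (n + 1) * (2 * ((n : ℤ) - k) + 1) * clfTerm n k := by
  rcases le_or_gt k n with hkn | hnk
  · obtain ⟨j, rfl⟩ := Nat.exists_eq_add_of_le hkn
    have hchoose := Nat.choose_mul_succ_eq (k + j) k
    have hcentral := Nat.succ_mul_centralBinom_succ j
    simp only [clfTerm, Nat.centralBinom_eq_two_mul_choose, show k + j + 1 - k = j + 1 by omega,
      Nat.add_sub_cancel_left] at *
    zify at hchoose hcentral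
    push_cast
    linear_combination ((j : ℤ) + 1) * ((k + j + 1).choose k * (2 * k).choose k : ℤ) * hcentral
      - 2 * (2 * (j : ℤ) + 1) * ((2 * k).choose k * (2 * j).choose j : ℤ) * hchoose
  · rw [clfTerm_eq_zero hnk]
    rcases (Nat.succ_le_of_lt hnk).eq_or_lt with rfl | hlt
    · push_cast; ring
    · rw [clfTerm_eq_zero hlt]; ring

-- `2 * n - 2 * k - 1` is odd, so the denominator vanishes only at `n = 0`.
def clfCert (n k : ℕ) : ℚ :=
  (k : ℚ) ^ 2 * (2 * n * k - 2 * n ^ 2 + 3 * n - 2 * k) / (n * (2 * n - 2 * k - 1)) * clfTerm n k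

lemma mul_clfCert {n : ℕ} (hn : n ≠ 0) (k : ℕ) :
    (n * (2 * n - 2 * k - 1)) * clfCert n k =
      (k : ℚ) ^ 2 * (2 * n * k - 2 * n ^ 2 + 3 * n - 2 * k) * clfTerm n k := by
  have hodd : (2 * n - 2 * k - 1 : ℚ) ≠ 0 := by
    have : (2 * n - 2 * k - 1 : ℤ) ≠ 0 := by omega
    exact_mod_cast this
  rw [clfCert, div_mul_eq_mul_div, mul_div_cancel₀ _ (mul_ne_zero (Nat.cast_ne_zero.2 hn) hodd)]

lemma clfTerm_add_two_telescope (n k : ℕ) :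
    ((n : ℚ) + 2) ^ 2 * clfTerm (n + 2) k
        - 4 * (3 * ((n : ℚ) + 2) ^ 2 - 3 * ((n : ℚ) + 2) + 1) * clfTerm (n + 1) k
        + 32 * ((n : ℚ) + 1) ^ 2 * clfTerm n k
      = clfCert (n + 2) (k + 1) - clfCert (n + 2) k := by
  have hsucc₀ : ((n : ℚ) + 1 - k) ^ 2 * clfTerm (n + 1) k =
      2 * (n + 1) * (2 * ((n : ℚ) - k) + 1) * clfTerm n k := by
    exact_mod_cast clfTerm_succ_left n k
  have hsucc₁ : ((n : ℚ) + 2 - k) ^ 2 * clfTerm (n + 2) k =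
      2 * (n + 2) * (2 * ((n : ℚ) + 1 - k) + 1) * clfTerm (n + 1) k := by
    have h := congrArg (Int.cast : ℤ → ℚ) (clfTerm_succ_left (n + 1) k)
    push_cast at h
    linear_combination h
  have hdiag : ((k : ℚ) + 1) ^ 2 * clfTerm (n + 2) (k + 1) =
      2 * (n + 2) * (2 * k + 1) * clfTerm (n + 1) k := by
    exact_mod_cast clfTerm_succ_succ (n + 1) k
  have hcert₀ := mul_clfCert (n + 1).succ_ne_zero k
  have hcert₁ := mul_clfCert (n + 1).succ_ne_zero (k + 1)
  push_cast at hcert₀ hcert₁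
  have hD : ((n : ℚ) + 2) * (2 * n + 3 - 2 * k) * (2 * n + 1 - 2 * k) ≠ 0 := by
    have : ((n : ℤ) + 2) * (2 * n + 3 - 2 * k) * (2 * n + 1 - 2 * k) ≠ 0 := by
      simp only [ne_eq, mul_eq_zero, not_or]; omega
    exact_mod_cast this
  -- clear the denominators of both certificates, then eliminate all terms but `clfTerm (n + 1) k`
  apply mul_left_cancel₀ hD
  linear_combination
    (-16 * ((n : ℚ) + 1) * (n + 2) * (2 * n + 3 - 2 * k)) * hsucc₀
    + ((2 * (n : ℚ) + 2) * k + (n + 2) * (2 * n + 3)) * (2 * n + 1 - 2 * k) * hsucc₁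
    - (2 * ((n : ℚ) + 2) * (k + 1) - 2 * (n + 2) ^ 2 + 3 * (n + 2) - 2 * (k + 1))
      * (2 * n + 3 - 2 * k) * hdiag
    - (2 * (n : ℚ) + 3 - 2 * k) * hcert₁ + (2 * (n : ℚ) + 1 - 2 * k) * hcert₀

def clfSum (n : ℕ) : ℕ := ∑ k ∈ range (n + 1), clfTerm n k

lemma clfSum_eq_sum_range {n N : ℕ} (h : n + 1 ≤ N) :
    clfSum n = ∑ k ∈ range N, clfTerm n k :=
  sum_subset (range_subset_range.2 h) fun _ _ hk ↦ clfTerm_eq_zero (by simpa using hk)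

lemma clfSum_recurrence (n : ℕ) :
    ((n : ℚ) + 2) ^ 2 * clfSum (n + 2) =
      4 * (3 * ((n : ℚ) + 2) ^ 2 - 3 * ((n : ℚ) + 2) + 1) * clfSum (n + 1)
        - 32 * ((n : ℚ) + 1) ^ 2 * clfSum n := by
  have htele := sum_range_sub (clfCert (n + 2)) (n + 3)
  simp only [← clfTerm_add_two_telescope, sum_add_distrib, sum_sub_distrib, ← mul_sum] at htele
  have hcert₀ : clfCert (n + 2) 0 = 0 := by simp [clfCert]
  have hcert_top : clfCert (n + 2) (n + 3) = 0 := by simp [clfCert, clfTerm_eq_zero]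
  rw [clfSum_eq_sum_range (N := n + 3) le_rfl, clfSum_eq_sum_range (N := n + 3) (by omega),
    clfSum_eq_sum_range (N := n + 3) (by omega)]
  push_cast
  linear_combination htele + hcert_top - hcert₀

lemma isCLFRecurrence_two_pow_mul_clfSum : IsCLFRecurrence fun n ↦ (2 : ℤ) ^ n * clfSum n := by
  intro n hn
  obtain ⟨n, rfl⟩ := Nat.exists_eq_add_of_le' hn
  simp only [Nat.add_sub_cancel, show n + 2 - 1 = n + 1 by omega]
  apply Int.cast_injective (α := ℚ)
  push_cast
  linear_combination (2 : ℚ) ^ n * 4 * clfSum_recurrence n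

lemma Nat.Prime.dvd_choose_two_mul {p j : ℕ} (hp : p.Prime) (hj : j < p) (hpj : p ≤ 2 * j) :
    p ∣ (2 * j).choose j := by
  simpa [two_mul] using hp.dvd_choose_add hj hj (by omega)

section Prime

variable {p : ℕ} [Fact p.Prime]

lemma ZMod.cast_choose_pred {k : ℕ} (hk : k < p) : ((p - 1).choose k : ZMod p) = (-1) ^ k := by
  induction k with
  | zero => simp
  | succ k ih =>
    have hpascal := Nat.choose_succ_succ' (p - 1) k
    rw [Nat.sub_add_cancel (Fact.out : p.Prime).one_le] at hpascal
    have hvanish : (p.choose (k + 1) : ZMod p) = 0 :=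
      (ZMod.natCast_eq_zero_iff _ _).2 ((Fact.out : p.Prime).dvd_choose_self k.succ_ne_zero hk)
    rw [hpascal, Nat.cast_add, ih (by omega)] at hvanish
    rw [pow_succ]
    linear_combination hvanish

lemma ZMod.cast_clfTerm_pred_of_ne {k : ℕ} (hk : k ≠ (p - 1) / 2) :
    (clfTerm (p - 1) k : ZMod p) = 0 := by
  have hp : p.Prime := Fact.out
  rcases lt_or_ge (p - 1) k with hpk | hkp
  · simp [clfTerm_eq_zero hpk]
  rw [ZMod.natCast_eq_zero_iff, clfTerm]
  rcases hk.lt_or_gt with hlt | hgt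
  · exact dvd_mul_of_dvd_right (hp.dvd_choose_two_mul (by omega) (by omega)) _
  · exact dvd_mul_of_dvd_left
      (dvd_mul_of_dvd_right (hp.dvd_choose_two_mul (by omega) (by omega)) _) _

lemma ZMod.cast_clfSum_pred (hodd : Odd p) : (clfSum (p - 1) : ZMod p) = (-1) ^ ((p - 1) / 2) := by
  obtain ⟨m, rfl⟩ := hodd
  have hm : (2 * m + 1 - 1) / 2 = m := by omega
  rw [clfSum, Nat.cast_sum, sum_eq_single_of_mem m (by simp; omega)
    fun k _ hk ↦ ZMod.cast_clfTerm_pred_of_ne (by omega), hm]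
  simp only [clfTerm, Nat.add_sub_cancel, show 2 * m - m = m by omega, Nat.cast_mul]
  have hcentral := ZMod.cast_choose_pred (p := 2 * m + 1) (k := m) (by omega)
  rw [Nat.add_sub_cancel] at hcentral
  rw [hcentral, ← mul_pow, ← mul_pow]
  norm_num

end Prime

/-- For an odd prime `p` and `0 ≤ n ≤ p-1`,
`128^n P (p-1-n) ≡ (-1)^((p-1)/2) P n (mod p)`. -/
theorem clf_symmetry (p : ℕ) (hp : p.Prime) (hodd : Odd p)
    (P : ℕ → ℤ) (h0 : P 0 = 1) (h1 : P 1 = 8)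
    (hrec : ∀ n : ℕ, 2 ≤ n →
      (n : ℤ) ^ 2 * P n =
        8 * (3 * (n : ℤ) ^ 2 - 3 * (n : ℤ) + 1) * P (n - 1)
          - 128 * ((n : ℤ) - 1) ^ 2 * P (n - 2)) :
    ∀ n : ℕ, n ≤ p - 1 →
      128 ^ n * P (p - 1 - n) ≡ (-1) ^ ((p - 1) / 2) * P n [ZMOD p] := by
  have := Fact.mk hp
  have hrec : IsCLFRecurrence P := hrec
  have hclosed : P = fun n ↦ (2 : ℤ) ^ n * clfSum n :=
    hrec.eq_of_initial_eq isCLFRecurrence_two_pow_mul_clfSum (by simp [h0, clfSum, clfTerm])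
      (by simp [h1, clfSum, clfTerm, sum_range_succ])
  have htwo : (2 : ZMod p) ≠ 0 := Ring.two_ne_zero <| by
    rw [ZMod.ringChar_zmod_n]
    rintro rfl
    exact Nat.not_odd_iff_even.2 even_two hodd
  have hmiddle : (P (p - 1) : ZMod p) = (-1) ^ ((p - 1) / 2) := by
    rw [hclosed]
    push_cast
    rw [ZMod.pow_card_sub_one_eq_one htwo, one_mul, ZMod.cast_clfSum_pred hodd]
  intro n hn
  rw [← ZMod.intCast_eq_intCast_iff]
  push_cast
  rw [← hmiddle]
  exact (hrec.map (Int.castRingHom (ZMod p))).reflect (by simp [h0]) (by simp [h1]) n hn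
end

section
/- For an odd prime p and 0 ≤ n ≤ p-1, the Franel numbers satisfy f_n ≡ (-8)^n f_{p-1-n} (mod p). In particular, p divides f_n if and only if p divides f_{p-1-n}. -/
/-!
Cusick's recurrence follows by telescoping with a WZ certificate.
Modulo `p` we have `C(p-1, r) ≡ (-1)^r`, hence `f_{p-1} ≡ 1` for odd `p`, and the recurrence at
`n = p-2` gives `-8 f_{p-2} ≡ 2 f_{p-1}`. The substitution `n ↦ p-3-n` fixes `7n² + 21n + 16`
and swaps `(n+1)²` with `(n+2)²` modulo `p`, so `k ↦ (-8)^k f_{p-1-k}` also satisfies Cusick's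
recurrence modulo `p`. Both sequences start with `1, 2`, and the leading coefficient `(n+2)²` is a
unit for `n + 2 < p`, so they agree on `0, …, p-1`.
-/

def franel (n : ℕ) : ℕ := ∑ r ∈ Finset.range (n + 1), (n.choose r) ^ 3

open Finset

def cusickSummand (n k : ℕ) : ℤ :=
  (n + 2) ^ 2 * (n + 2).choose k ^ 3 - (7 * n ^ 2 + 21 * n + 16) * (n + 1).choose k ^ 3
    - 8 * (n + 1) ^ 2 * n.choose k ^ 3

/-- The WZ certificate of `cusickSummand`, found by Zeilberger's algorithm. -/
def cusickCertificate (n k : ℕ) : ℤ :=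
  (n + 2) ^ 2 * (n + 1).choose k ^ 3 + 3 * (n + 1) * (n + 2) * (n + 1).choose k ^ 2 * n.choose k
    + 6 * (n + 1) ^ 2 * (n + 1).choose k * n.choose k ^ 2 + 4 * (n + 1) ^ 2 * n.choose k ^ 3

/-- Here `x, y, z, w, v` stand for `C(n, j), C(n, j+1), C(n+1, j), C(n+1, j+1), C(n+2, j+1)`. -/
lemma cusick_wz_identity {K : Type*} [Field K] (n j x y z w v : K) (hj : j + 1 ≠ 0)
    (hn : n + 1 ≠ 0) (hw : w = x + y) (hv : v = z + w) (hx : (j + 1) * w = (n + 1) * x)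
    (hz : (j + 1) * v = (n + 2) * z) :
    (n + 2) ^ 2 * v ^ 3 - (7 * n ^ 2 + 21 * n + 16) * w ^ 3 - 8 * (n + 1) ^ 2 * y ^ 3 =
      ((n + 2) ^ 2 * z ^ 3 + 3 * (n + 1) * (n + 2) * z ^ 2 * x + 6 * (n + 1) ^ 2 * z * x ^ 2
          + 4 * (n + 1) ^ 2 * x ^ 3)
        - ((n + 2) ^ 2 * w ^ 3 + 3 * (n + 1) * (n + 2) * w ^ 2 * y + 6 * (n + 1) ^ 2 * w * y ^ 2
          + 4 * (n + 1) ^ 2 * y ^ 3) := by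
  have hy : y = w - x := by rw [hw]; ring
  have hzw : (j + 1) * w = (n + 1 - j) * z := by
    rw [hv] at hz
    linear_combination hz
  have hw' : w = (n + 1 - j) * z / (j + 1) := by
    rw [eq_div_iff hj]
    linear_combination hzw
  have hx' : x = (n + 1 - j) * z / (n + 1) := by
    rw [eq_div_iff hn]
    linear_combination hzw - hx
  subst hy hv
  rw [hx', hw']
  field_simp
  ring

lemma cusickSummand_zero (n : ℕ) : cusickSummand n 0 = -cusickCertificate n 0 := by
  simp only [cusickSummand, cusickCertificate, Nat.choose_zero_right]
  ring

lemma cusickSummand_succ (n j : ℕ) :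
    cusickSummand n (j + 1) = cusickCertificate n j - cusickCertificate n (j + 1) := by
  have key := cusick_wz_identity (n : ℚ) j (n.choose j) (n.choose (j + 1)) ((n + 1).choose j)
    ((n + 1).choose (j + 1)) ((n + 2).choose (j + 1)) (by positivity) (by positivity)
    (by exact_mod_cast Nat.choose_succ_succ n j)
    (by exact_mod_cast Nat.choose_succ_succ (n + 1) j)
    (by rw [mul_comm]; exact_mod_cast (Nat.add_one_mul_choose_eq n j).symm)
    (by rw [mul_comm]; exact_mod_cast (Nat.add_one_mul_choose_eq (n + 1) j).symm)
  simp only [cusickSummand, cusickCertificate]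
  exact_mod_cast key

lemma sum_range_cusickSummand (n m : ℕ) :
    ∑ k ∈ range (m + 1), cusickSummand n k = -cusickCertificate n m := by
  induction m with
  | zero => simp [cusickSummand_zero]
  | succ m ih => rw [sum_range_succ, ih, cusickSummand_succ]; ring

lemma cusickCertificate_add_two_self (n : ℕ) : cusickCertificate n (n + 2) = 0 := by
  simp [cusickCertificate, Nat.choose_eq_zero_of_lt]

lemma franel_eq_sum_range {n m : ℕ} (h : n < m) : franel n = ∑ r ∈ range m, n.choose r ^ 3 :=
  sum_subset (range_subset_range.2 h) fun r _ hr ↦ by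
    simp [Nat.choose_eq_zero_of_lt (not_lt.1 (mt mem_range.2 hr))]

theorem franel_recurrence (n : ℕ) :
    (n + 2) ^ 2 * franel (n + 2) =
      (7 * n ^ 2 + 21 * n + 16) * franel (n + 1) + 8 * (n + 1) ^ 2 * franel n := by
  have htel := sum_range_cusickSummand n (n + 2)
  rw [cusickCertificate_add_two_self, neg_zero] at htel
  simp only [cusickSummand, sum_sub_distrib, ← mul_sum] at htel
  have hsum (i : ℕ) (hi : i < n + 3) :
      (franel i : ℤ) = ∑ k ∈ range (n + 3), (i.choose k : ℤ) ^ 3 := by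
    rw [franel_eq_sum_range hi]
    push_cast
    rfl
  zify
  rw [hsum n (by omega), hsum (n + 1) (by omega), hsum (n + 2) (by omega)]
  linear_combination htel

def SatisfiesCusickAt {R : Type*} [CommSemiring R] (u : ℕ → R) (n : ℕ) : Prop :=
  ((n : R) + 2) ^ 2 * u (n + 2) = (7 * n ^ 2 + 21 * n + 16) * u (n + 1) + 8 * (n + 1) ^ 2 * u n

lemma satisfiesCusickAt_franel {R : Type*} [CommSemiring R] (n : ℕ) :
    SatisfiesCusickAt (fun k ↦ (franel k : R)) n := by
  have h := congrArg (Nat.cast : ℕ → R) (franel_recurrence n)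
  push_cast at h
  exact h

lemma satisfiesCusickAt_reflect {p : ℕ} {u : ℕ → ZMod p} {n : ℕ} (hn : n + 3 ≤ p)
    (hu : SatisfiesCusickAt u (p - 3 - n)) :
    SatisfiesCusickAt (fun k ↦ (-8) ^ k * u (p - 1 - k)) n := by
  obtain ⟨m, rfl⟩ : ∃ m, p = m + n + 3 := ⟨p - n - 3, by omega⟩
  have hm : (m : ZMod (m + n + 3)) = -(n + 3) := by
    have h := ZMod.natCast_self (m + n + 3)
    push_cast at h
    linear_combination h
  unfold SatisfiesCusickAt at hu ⊢
  dsimp only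
  rw [show m + n + 3 - 3 - n = m by omega, hm] at hu
  rw [show m + n + 3 - 1 - n = m + 2 by omega, show m + n + 3 - 1 - (n + 1) = m + 1 by omega,
    show m + n + 3 - 1 - (n + 2) = m by omega]
  linear_combination (-8 * (-8) ^ n) * hu

lemma eq_of_satisfiesCusickAt {p : ℕ} [Fact p.Prime] {u v : ℕ → ZMod p}
    (hu : ∀ n, n + 2 < p → SatisfiesCusickAt u n)
    (hv : ∀ n, n + 2 < p → SatisfiesCusickAt v n)
    (h0 : u 0 = v 0) (h1 : u 1 = v 1) {n : ℕ} (hn : n < p) : u n = v n := by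
  induction n using Nat.twoStepInduction with
  | zero => exact h0
  | one => exact h1
  | more n ih0 ih1 =>
    have hunit : ((n : ZMod p) + 2) ^ 2 ≠ 0 := by
      refine pow_ne_zero 2 fun h ↦ ?_
      have := (ZMod.natCast_eq_zero_iff (n + 2) p).1 (by exact_mod_cast h)
      exact absurd (Nat.le_of_dvd (by omega) this) (by omega)
    apply mul_left_cancel₀ hunit
    rw [hu n hn, hv n hn, ih0 (by omega), ih1 (by omega)]

lemma cast_choose_pred_prime {p r : ℕ} (hp : p.Prime) (hr : r < p) :
    ((p - 1).choose r : ZMod p) = (-1) ^ r := by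
  induction r with
  | zero => simp
  | succ r ih =>
    have hpascal : (p - 1).choose r + (p - 1).choose (r + 1) = p.choose (r + 1) := by
      rw [← Nat.choose_succ_succ', Nat.sub_add_cancel hp.one_le]
    have hdvd : (p.choose (r + 1) : ZMod p) = 0 :=
      (ZMod.natCast_eq_zero_iff _ _).2 (hp.dvd_choose_self r.succ_ne_zero hr)
    rw [← hpascal, Nat.cast_add, ih (by omega)] at hdvd
    linear_combination hdvd

lemma franel_pred_prime {p : ℕ} (hp : p.Prime) (hodd : Odd p) :
    (franel (p - 1) : ZMod p) = 1 := by
  have hterm : ∀ r ∈ range p, ((p - 1).choose r : ZMod p) ^ 3 = (-1) ^ r := fun r hr ↦ by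
    rw [cast_choose_pred_prime hp (mem_range.1 hr), ← pow_mul, mul_comm, pow_mul]
    norm_num
  rw [franel, Nat.sub_add_cancel hp.one_le]
  push_cast
  rw [sum_congr rfl hterm, neg_one_geom_sum, if_neg (Nat.not_even_iff_odd.2 hodd)]

lemma neg_eight_mul_franel_sub_two_prime {p : ℕ} (hp : p.Prime) :
    -8 * (franel (p - 2) : ZMod p) = 2 * franel (p - 1) := by
  obtain ⟨q, rfl⟩ : ∃ q, p = q + 2 := ⟨p - 2, by have := hp.two_le; omega⟩
  have hq : (q : ZMod (q + 2)) = -2 := by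
    have h := ZMod.natCast_self (q + 2)
    push_cast at h
    linear_combination h
  have hrec := satisfiesCusickAt_franel (R := ZMod (q + 2)) q
  unfold SatisfiesCusickAt at hrec
  rw [hq] at hrec
  rw [show q + 2 - 2 = q by omega, show q + 2 - 1 = q + 1 by omega]
  linear_combination hrec

lemma isUnit_neg_eight {p : ℕ} (hodd : Odd p) : IsUnit (-8 : ZMod p) := by
  have h8 : IsUnit ((8 : ℕ) : ZMod p) :=
    (ZMod.isUnit_iff_coprime 8 p).2 (by simpa using (Nat.coprime_two_left.2 hodd).pow_left 3)
  simpa using h8.neg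

lemma cast_franel_eq_neg_eight_pow_mul {p n : ℕ} (hp : p.Prime) (hodd : Odd p)
    (hn : n < p) : (franel n : ZMod p) = (-8) ^ n * franel (p - 1 - n) := by
  have := Fact.mk hp
  refine eq_of_satisfiesCusickAt (fun n _ ↦ satisfiesCusickAt_franel n)
    (fun n hn ↦ satisfiesCusickAt_reflect (by omega) (satisfiesCusickAt_franel _)) ?_ ?_ hn
  · rw [Nat.sub_zero, franel_pred_prime hp hodd, pow_zero, one_mul]
    simp [franel]
  · simp only [pow_one, Nat.sub_sub, neg_eight_mul_franel_sub_two_prime hp,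
      franel_pred_prime hp hodd]
    norm_num [franel, sum_range_succ]

/-- For an odd prime `p` and `0 ≤ n ≤ p-1`, `f n ≡ (-8)^n f (p-1-n) (mod p)`;
in particular `p ∣ f n ↔ p ∣ f (p-1-n)`. -/
theorem franel_symmetry (p : ℕ) (hp : p.Prime) (hodd : Odd p) :
    ∀ n : ℕ, n ≤ p - 1 →
      (franel n : ℤ) ≡ (-8) ^ n * (franel (p - 1 - n) : ℤ) [ZMOD p] ∧
        (p ∣ franel n ↔ p ∣ franel (p - 1 - n)) := by
  intro n hn
  have key := cast_franel_eq_neg_eight_pow_mul hp hodd (n := n) (by have := hp.two_le; omega)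
  refine ⟨(ZMod.intCast_eq_intCast_iff _ _ p).1 (by push_cast; exact key), ?_⟩
  rw [← ZMod.natCast_eq_zero_iff, ← ZMod.natCast_eq_zero_iff, key,
    ((isUnit_neg_eight hodd).pow n).mul_right_eq_zero]
end
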